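/- Let ε ≠ 0, γ > 0, and define H(x) = ½[x(x + √(x² − ε²))/ε² − ln(x + √(x² − ε²))] for x ≥ |ε|. Let E : I → ℝ be differentiable on an open interval I with E(t) > |ε| and E′(t) = −γ(E(t) − √(E(t)² − ε²)) for all t ∈ I. Then d/dt H(E(t)) = −γ for all t ∈ I; equivalently, H(E(t)) = H(E(t₀)) − γ(t − t₀) for all t, t₀ ∈ I. -/

import Mathlib

/-!
With `w(x) = x + √(x² − ε²)` one has `w (x − √(x² − ε²)) = ε²` and `w' = w / √(x² − ε²)`,
which give `H' = w / ε²`. Along the flow `E' = −γ (E − √(E² − ε²)) = −γ ε² / w(E)`, so the chain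
rule yields `(H ∘ E)' = −γ`, and the mean value theorem integrates this on the interval.
-/

/-- The function `H(x) = ½[x(x + √(x² − ε²))/ε² − ln(x + √(x² − ε²))]`. -/
noncomputable def Hfun (ε x : ℝ) : ℝ :=
  (1 / 2) * (x * (x + Real.sqrt (x ^ 2 - ε ^ 2)) / ε ^ 2
    - Real.log (x + Real.sqrt (x ^ 2 - ε ^ 2)))

theorem IsOpen.eq_add_mul_sub_of_hasDerivAt {s : Set ℝ} (hs : IsOpen s) (hs' : IsPreconnected s)
    {f : ℝ → ℝ} {c : ℝ} (hf : ∀ x ∈ s, HasDerivAt f c x) {x y : ℝ} (hx : x ∈ s) (hy : y ∈ s) :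
    f x = f y + c * (x - y) := by
  have hg : ∀ t ∈ s, HasDerivAt (fun t => f t - c * t) 0 t := fun t ht =>
    ((hf t ht).sub ((hasDerivAt_id' t).const_mul c)).congr_deriv (by ring)
  have := hs.is_const_of_deriv_eq_zero hs'
    (fun t ht => (hg t ht).differentiableAt.differentiableWithinAt)
    (fun t ht => (hg t ht).deriv) hx hy
  linarith

namespace Hfun

theorem add_sqrt_mul_sub_sqrt {ε x : ℝ} (hx : ε ^ 2 ≤ x ^ 2) :
    (x + √(x ^ 2 - ε ^ 2)) * (x - √(x ^ 2 - ε ^ 2)) = ε ^ 2 := by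
  have := Real.sq_sqrt (sub_nonneg.2 hx)
  linear_combination -this

theorem hasDerivAt_add_sqrt {ε x : ℝ} (hx : ε ^ 2 < x ^ 2) :
    HasDerivAt (fun y => y + √(y ^ 2 - ε ^ 2))
      ((x + √(x ^ 2 - ε ^ 2)) / √(x ^ 2 - ε ^ 2)) x := by
  have hpos : 0 < x ^ 2 - ε ^ 2 := sub_pos.2 hx
  have hu : √(x ^ 2 - ε ^ 2) ≠ 0 := (Real.sqrt_pos.2 hpos).ne'
  have hsqrt := ((hasDerivAt_pow 2 x).sub_const (ε ^ 2)).sqrt hpos.ne'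
  refine ((hasDerivAt_id x).add hsqrt).congr_deriv ?_
  field_simp
  ring

theorem hasDerivAt {ε x : ℝ} (hε : ε ≠ 0) (hx : ε ^ 2 < x ^ 2) :
    HasDerivAt (Hfun ε) ((x + √(x ^ 2 - ε ^ 2)) / ε ^ 2) x := by
  have hw' := hasDerivAt_add_sqrt hx
  have hprod := add_sqrt_mul_sub_sqrt hx.le
  set u := √(x ^ 2 - ε ^ 2) with hu_def
  have hu : u ≠ 0 := (Real.sqrt_pos.2 (sub_pos.2 hx)).ne'
  have hw : x + u ≠ 0 := left_ne_zero_of_mul (hprod ▸ pow_ne_zero 2 hε)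
  refine ((((hasDerivAt_id x).mul hw').div_const (ε ^ 2)).sub
    (hw'.log hw) |>.const_mul (1 / 2)).congr_deriv ?_
  rw [← hu_def, id]
  field_simp
  linear_combination hprod

end Hfun

theorem stmt_18_general (ε γ a b : ℝ) (hε : ε ≠ 0) (E : ℝ → ℝ)
    (hE : ∀ t ∈ Set.Ioo a b, |ε| < E t)
    (hE' : ∀ t ∈ Set.Ioo a b,
      HasDerivAt E (-(γ * (E t - Real.sqrt ((E t) ^ 2 - ε ^ 2)))) t) :
    (∀ t ∈ Set.Ioo a b, HasDerivAt (fun s => Hfun ε (E s)) (-γ) t) ∧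
    (∀ t ∈ Set.Ioo a b, ∀ t₀ ∈ Set.Ioo a b,
      Hfun ε (E t) = Hfun ε (E t₀) - γ * (t - t₀)) := by
  have hderiv : ∀ t ∈ Set.Ioo a b, HasDerivAt (fun s => Hfun ε (E s)) (-γ) t := by
    intro t ht
    have hsq : ε ^ 2 < E t ^ 2 := by simpa using sq_lt_sq.2 ((hE t ht).trans_le (le_abs_self _))
    refine ((Hfun.hasDerivAt hε hsq).comp t (hE' t ht)).congr_deriv ?_
    field_simp
    linear_combination (-γ) * Hfun.add_sqrt_mul_sub_sqrt hsq.le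
  refine ⟨hderiv, fun t ht t₀ ht₀ => ?_⟩
  rw [sub_eq_add_neg, ← neg_mul]
  exact isOpen_Ioo.eq_add_mul_sub_of_hasDerivAt isPreconnected_Ioo hderiv ht ht₀

/-- Along solutions of `E′ = −γ(E − √(E² − ε²))` with `E > |ε|`, one has
`d/dt H(E(t)) = −γ`; equivalently `H(E(t)) = H(E(t₀)) − γ(t − t₀)`. -/
theorem stmt_18 (ε γ a b : ℝ) (hε : ε ≠ 0) (hγ : 0 < γ) (E : ℝ → ℝ)
    (hE : ∀ t ∈ Set.Ioo a b, |ε| < E t)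
    (hE' : ∀ t ∈ Set.Ioo a b,
      HasDerivAt E (-(γ * (E t - Real.sqrt ((E t) ^ 2 - ε ^ 2)))) t) :
    (∀ t ∈ Set.Ioo a b, HasDerivAt (fun s => Hfun ε (E s)) (-γ) t) ∧
    (∀ t ∈ Set.Ioo a b, ∀ t₀ ∈ Set.Ioo a b,
      Hfun ε (E t) = Hfun ε (E t₀) - γ * (t - t₀)) :=
  stmt_18_general ε γ a b hε E hE hE'
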